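/- arXiv:2502.08578 — 7 statements merged into one kernel-verified Lean document; each statement's English description precedes it below -/
import Mathlib

section
/- For any real q > 1 and λ ∈ (0,1), define δ = (λ^{-q/(q-1)} - 1)^{(q-1)/q} and h(x) = λ(δ(1-x)^{1/q} - x^{1/q}) for x ∈ (0,1). Then h is convex on (0, z] and concave on [z, 1), where z = δ^{-q/(2q-1)}/(δ^{-q/(2q-1)} + 1). -/
/-!
With `p = 1/q`, `h'' x = λ p (p - 1) (δ (1 - x) ^ (p - 2) - x ^ (p - 2))`. Since `p (p - 1) < 0`
and `p - 2 < 0`, `h'' x ≥ 0` iff `(x / (1 - x)) ^ (p - 2) ≥ δ` iff `x / (1 - x) ≤ δ ^ (p - 2)⁻¹`,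
and `(p - 2)⁻¹ = -q / (2q - 1)`, so the sign of `h''` changes exactly at `z`.
-/

open Real Set

lemma hasDerivAt_mul_one_sub_rpow_add_mul_rpow (a b r : ℝ) {x : ℝ} (hx : x ∈ Ioo (0 : ℝ) 1) :
    HasDerivAt (fun y => a * (1 - y) ^ r + b * y ^ r)
      (r * (b * x ^ (r - 1) - a * (1 - x) ^ (r - 1))) x := by
  have hsub : HasDerivAt (fun y : ℝ => (1 - y) ^ r) (r * (1 - x) ^ (r - 1) * -1) x :=
    (hasDerivAt_rpow_const (Or.inl (sub_pos.2 hx.2).ne')).comp x ((hasDerivAt_id x).const_sub 1)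
  have hpow : HasDerivAt (fun y : ℝ => y ^ r) (r * x ^ (r - 1)) x :=
    hasDerivAt_rpow_const (Or.inl hx.1.ne')
  exact ((hsub.const_mul a).add (hpow.const_mul b)).congr_deriv (by ring)

lemma mul_one_sub_rpow_le_rpow_iff {c r x : ℝ} (hc : 0 < c) (hr : r < 0) (hx : x ∈ Ioo (0 : ℝ) 1) :
    c * (1 - x) ^ r ≤ x ^ r ↔ x ≤ c ^ r⁻¹ / (c ^ r⁻¹ + 1) := by
  obtain ⟨hx0, hx1⟩ := hx
  have hx1' : 0 < 1 - x := sub_pos.2 hx1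
  have ht : 0 < c ^ r⁻¹ := rpow_pos_of_pos hc _
  calc c * (1 - x) ^ r ≤ x ^ r ↔ c ≤ (x / (1 - x)) ^ r := by
        rw [div_rpow hx0.le hx1'.le, le_div_iff₀ (rpow_pos_of_pos hx1' _)]
    _ ↔ (c ^ r⁻¹) ^ r ≤ (x / (1 - x)) ^ r := by
        rw [← rpow_mul hc.le, inv_mul_cancel₀ hr.ne, rpow_one]
    _ ↔ x / (1 - x) ≤ c ^ r⁻¹ := rpow_le_rpow_iff_of_neg ht (div_pos hx0 hx1') hr
    _ ↔ x ≤ c ^ r⁻¹ / (c ^ r⁻¹ + 1) := by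
        rw [div_le_iff₀ hx1', le_div_iff₀ (by positivity)]
        constructor <;> intro h <;> linarith

section
variable {c p : ℝ}

lemma continuous_mul_one_sub_rpow_sub_rpow (hp : 0 < p) :
    Continuous fun x : ℝ => c * (1 - x) ^ p - x ^ p := by
  have hpow := continuous_rpow_const (q := p) hp.le
  exact (continuous_const.mul (hpow.comp (continuous_const.sub continuous_id))).sub hpow

lemma hasDerivAt_mul_one_sub_rpow_sub_rpow {x : ℝ} (hx : x ∈ Ioo (0 : ℝ) 1) :
    HasDerivAt (fun y => c * (1 - y) ^ p - y ^ p)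
      (-p * c * (1 - x) ^ (p - 1) + -p * x ^ (p - 1)) x := by
  convert hasDerivAt_mul_one_sub_rpow_add_mul_rpow c (-1) p hx using 1
  · ext y; ring
  · ring

lemma hasDerivAt_deriv_mul_one_sub_rpow_sub_rpow {x : ℝ} (hx : x ∈ Ioo (0 : ℝ) 1) :
    HasDerivAt (fun y => -p * c * (1 - y) ^ (p - 1) + -p * y ^ (p - 1))
      (p * (p - 1) * (c * (1 - x) ^ (p - 2) - x ^ (p - 2))) x := by
  convert hasDerivAt_mul_one_sub_rpow_add_mul_rpow (-p * c) (-p) (p - 1) hx using 1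
  rw [show p - 1 - 1 = p - 2 by ring]
  ring

lemma convexOn_mul_one_sub_rpow_sub_rpow {D : Set ℝ} (hD : Convex ℝ D)
    (hD₁ : interior D ⊆ Ioo 0 1) (hp0 : 0 < p) (hp1 : p < 1)
    (hsign : ∀ x ∈ interior D, c * (1 - x) ^ (p - 2) ≤ x ^ (p - 2)) :
    ConvexOn ℝ D fun x => c * (1 - x) ^ p - x ^ p :=
  convexOn_of_hasDerivWithinAt2_nonneg hD (continuous_mul_one_sub_rpow_sub_rpow hp0).continuousOn
    (fun x hx => (hasDerivAt_mul_one_sub_rpow_sub_rpow (hD₁ hx)).hasDerivWithinAt)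
    (fun x hx => (hasDerivAt_deriv_mul_one_sub_rpow_sub_rpow (hD₁ hx)).hasDerivWithinAt)
    (fun x hx => mul_nonneg_of_nonpos_of_nonpos
      (mul_nonpos_of_nonneg_of_nonpos hp0.le (by linarith)) (sub_nonpos.2 (hsign x hx)))

lemma concaveOn_mul_one_sub_rpow_sub_rpow {D : Set ℝ} (hD : Convex ℝ D)
    (hD₁ : interior D ⊆ Ioo 0 1) (hp0 : 0 < p) (hp1 : p < 1)
    (hsign : ∀ x ∈ interior D, x ^ (p - 2) ≤ c * (1 - x) ^ (p - 2)) :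
    ConcaveOn ℝ D fun x => c * (1 - x) ^ p - x ^ p :=
  concaveOn_of_hasDerivWithinAt2_nonpos hD (continuous_mul_one_sub_rpow_sub_rpow hp0).continuousOn
    (fun x hx => (hasDerivAt_mul_one_sub_rpow_sub_rpow (hD₁ hx)).hasDerivWithinAt)
    (fun x hx => (hasDerivAt_deriv_mul_one_sub_rpow_sub_rpow (hD₁ hx)).hasDerivWithinAt)
    (fun x hx => mul_nonpos_of_nonpos_of_nonneg
      (mul_nonpos_of_nonneg_of_nonpos hp0.le (by linarith)) (sub_nonneg.2 (hsign x hx)))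

lemma convexOn_Ioc_mul_one_sub_rpow_sub_rpow (hc : 0 < c) (hp0 : 0 < p) (hp1 : p < 1) :
    ConvexOn ℝ (Ioc 0 (c ^ (p - 2)⁻¹ / (c ^ (p - 2)⁻¹ + 1))) fun x => c * (1 - x) ^ p - x ^ p := by
  have hz : c ^ (p - 2)⁻¹ / (c ^ (p - 2)⁻¹ + 1) < 1 := by
    rw [div_lt_one (by positivity)]
    linarith
  refine convexOn_mul_one_sub_rpow_sub_rpow (convex_Ioc _ _)
    (by rw [interior_Ioc]; exact fun x hx => ⟨hx.1, hx.2.trans hz⟩) hp0 hp1 fun x hx => ?_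
  rw [interior_Ioc] at hx
  exact (mul_one_sub_rpow_le_rpow_iff hc (by linarith) ⟨hx.1, hx.2.trans hz⟩).2 hx.2.le

lemma concaveOn_Ico_mul_one_sub_rpow_sub_rpow (hc : 0 < c) (hp0 : 0 < p) (hp1 : p < 1) :
    ConcaveOn ℝ (Ico (c ^ (p - 2)⁻¹ / (c ^ (p - 2)⁻¹ + 1)) 1) fun x => c * (1 - x) ^ p - x ^ p := by
  have hz : 0 < c ^ (p - 2)⁻¹ / (c ^ (p - 2)⁻¹ + 1) := by positivity
  refine concaveOn_mul_one_sub_rpow_sub_rpow (convex_Ico _ _)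
    (by rw [interior_Ico]; exact fun x hx => ⟨hz.trans hx.1, hx.2⟩) hp0 hp1 fun x hx => ?_
  rw [interior_Ico] at hx
  exact (not_le.1 (mt (mul_one_sub_rpow_le_rpow_iff hc (by linarith)
    ⟨hz.trans hx.1, hx.2⟩).1 (not_le.2 hx.1))).le

end

/-- h(x) = λ(δ(1-x)^{1/q} - x^{1/q}) is convex on (0, z] and concave on [z, 1),
where z = δ^{-q/(2q-1)}/(δ^{-q/(2q-1)} + 1). -/
theorem stmt2 (q lam : ℝ) (hq : 1 < q) (hlam : lam ∈ Set.Ioo (0:ℝ) 1) :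
    let δ : ℝ := (lam ^ (-q/(q-1)) - 1) ^ ((q-1)/q)
    let z : ℝ := δ ^ (-q/(2*q-1)) / (δ ^ (-q/(2*q-1)) + 1)
    let h : ℝ → ℝ := fun x => lam * (δ * (1-x) ^ (1/q) - x ^ (1/q))
    ConvexOn ℝ (Set.Ioc 0 z) h ∧ ConcaveOn ℝ (Set.Ico z 1) h := by
  intro δ z h
  obtain ⟨hlam₀, hlam₁⟩ := hlam
  have hδ : 0 < δ := rpow_pos_of_pos (sub_pos.2 (one_lt_rpow_of_pos_of_lt_one_of_neg hlam₀ hlam₁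
    (div_neg_of_neg_of_pos (by linarith) (by linarith)))) _
  have hp₀ : 0 < 1 / q := by positivity
  have hp₁ : 1 / q < 1 := (div_lt_one (by linarith)).2 hq
  have hz : z = δ ^ (1 / q - 2)⁻¹ / (δ ^ (1 / q - 2)⁻¹ + 1) := by
    have hq₀ : q ≠ 0 := by positivity
    have hexp : (1 / q - 2)⁻¹ = -q / (2 * q - 1) := by
      rw [inv_eq_iff_eq_inv, inv_div]
      field_simp
      ring
    rw [hexp]
  rw [hz]
  exact ⟨(convexOn_Ioc_mul_one_sub_rpow_sub_rpow hδ hp₀ hp₁).smul hlam₀.le,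
    (concaveOn_Ico_mul_one_sub_rpow_sub_rpow hδ hp₀ hp₁).smul hlam₀.le⟩
end

section
/- For q > 1, λ ∈ (0,1), and a point p ∈ R^d with coordinates p_j = f_j/(1-c) for j ∈ S and p_j = 0 for j ∉ S, where f ∈ R^d has positive coordinates with ||f||_q = 1, S ⊆ [d] nonempty, c ∈ [0,1) satisfying c/(1-c) = (Δ_S̄/Δ_S)^{1/q}·(λ^{q/(q-1)}/(1-λ^{q/(q-1)}))^{1/q} with Δ_S = Σ_{j∈S} f_j^q and Δ_S̄ = 1 - Δ_S > 0, Δ_S > 0: then ||p - f||_q - λ·||p||_q = (1 - λ^{q/(q-1)})^{(q-1)/q}·Δ_S̄^{1/q} - λ·Δ_S^{1/q}. -/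
/-!
With `t = c / (1 - c)` and `μ = λ ^ (q / (q - 1))`, the vector `p - f` equals `t • f` on `S` and
`-f` off `S`, so `‖p - f‖_q ^ q = t ^ q Δ_S + Δ_S̄`, and `‖p‖_q = (1 + t) Δ_S ^ (1/q)`. The choice of
`c` makes `t ^ q Δ_S = Δ_S̄ μ / (1 - μ)`, hence `‖p - f‖_q = (Δ_S̄ / (1 - μ)) ^ (1/q)`. Since
`λ μ ^ (1/q) = μ`, the extra term `λ t Δ_S ^ (1/q)` equals `μ ‖p - f‖_q`, which leaves
`(1 - μ) ‖p - f‖_q - λ Δ_S ^ (1/q)`.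
-/

open Real Finset

section Sums

variable {ι : Type*} [Fintype ι] [DecidableEq ι] (S : Finset ι) {f : ι → ℝ} {q r : ℝ}

theorem sum_abs_ite_div_sub_rpow (hf : ∀ j, 0 ≤ f j) (hr0 : 0 < r) (hr1 : r ≤ 1) :
    ∑ j, |(if j ∈ S then f j / r else 0) - f j| ^ q
      = ((1 - r) / r) ^ q * ∑ j ∈ S, f j ^ q + ∑ j ∈ Sᶜ, f j ^ q := by
  rw [← sum_add_sum_compl S, mul_sum]
  congr 1
  · refine sum_congr rfl fun j hj => ?_
    have hdiff : f j / r - f j = f j * ((1 - r) / r) := by field_simp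
    have hscale : 0 ≤ (1 - r) / r := div_nonneg (by linarith) hr0.le
    rw [if_pos hj, hdiff, abs_of_nonneg (mul_nonneg (hf j) hscale), mul_rpow (hf j) hscale,
      mul_comm]
  · refine sum_congr rfl fun j hj => ?_
    rw [if_neg (mem_compl.mp hj), zero_sub, abs_neg, abs_of_nonneg (hf j)]

theorem sum_abs_ite_div_rpow (hq : q ≠ 0) (hf : ∀ j, 0 ≤ f j) (hr : 0 ≤ r) :
    ∑ j, |if j ∈ S then f j / r else 0| ^ q = (∑ j ∈ S, f j ^ q) / r ^ q := by
  rw [← sum_add_sum_compl S, sum_div]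
  have hoff : ∑ j ∈ Sᶜ, |if j ∈ S then f j / r else 0| ^ q = 0 :=
    sum_eq_zero fun j hj => by rw [if_neg (mem_compl.mp hj), abs_zero, zero_rpow hq]
  rw [hoff, add_zero]
  refine sum_congr rfl fun j hj => ?_
  rw [if_pos hj, abs_of_nonneg (div_nonneg (hf j) hr), div_rpow (hf j) hr]

end Sums

theorem mul_rpow_rpow_div_sub_one_rpow_inv {lam q : ℝ} (hl : 0 < lam) (hq : 1 < q) :
    lam * (lam ^ (q / (q - 1))) ^ (1 / q) = lam ^ (q / (q - 1)) := by
  have hexp : 1 + q / (q - 1) * (1 / q) = q / (q - 1) := by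
    field_simp [(by linarith : q - 1 ≠ 0)]
    ring
  rw [← rpow_mul hl.le]
  conv_rhs => rw [← hexp, rpow_add hl, rpow_one]

theorem rpow_inv_sub_mul_rpow_inv_eq {q lam A B c : ℝ} (hq : 1 < q) (hl0 : 0 < lam)
    (hl1 : lam < 1) (hA : 0 < A) (hB : 0 ≤ B) (hc1 : c < 1)
    (hceq : c / (1 - c) =
      (B / A) ^ (1 / q) * (lam ^ (q / (q - 1)) / (1 - lam ^ (q / (q - 1)))) ^ (1 / q)) :
    ((c / (1 - c)) ^ q * A + B) ^ (1 / q) - lam * (A / (1 - c) ^ q) ^ (1 / q)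
      = (1 - lam ^ (q / (q - 1))) ^ ((q - 1) / q) * B ^ (1 / q) - lam * A ^ (1 / q) := by
  have hq0 : q ≠ 0 := by linarith
  have h1c : 0 < 1 - c := by linarith
  set μ := lam ^ (q / (q - 1))
  set t := c / (1 - c) with ht
  have hμ0 : 0 < μ := rpow_pos_of_pos hl0 _
  have hμ1 : 0 < 1 - μ := by
    have : μ < 1 := rpow_lt_one hl0.le hl1 (div_pos (by linarith) (by linarith))
    linarith
  have hBA : 0 ≤ B / A := div_nonneg hB hA.le
  have hμμ : 0 ≤ μ / (1 - μ) := div_nonneg hμ0.le hμ1.le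
  have htq : t ^ q = B / A * (μ / (1 - μ)) := by
    rw [hceq, ← mul_rpow hBA hμμ, one_div, rpow_inv_rpow (mul_nonneg hBA hμμ) hq0]
  have hnorm_sub : (t ^ q * A + B) ^ (1 / q) = B ^ (1 / q) / (1 - μ) ^ (1 / q) := by
    have : t ^ q * A + B = B / (1 - μ) := by
      rw [htq]
      field_simp
      ring
    rw [this, div_rpow hB hμ1.le]
  have hnorm_p : (A / (1 - c) ^ q) ^ (1 / q) = A ^ (1 / q) * (1 + t) := by
    have : 1 + t = 1 / (1 - c) := by rw [ht]; field_simp; ring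
    rw [div_rpow hA.le (rpow_nonneg h1c.le _), one_div q, rpow_rpow_inv h1c.le hq0, this, ← one_div]
    ring
  have hcross : lam * A ^ (1 / q) * t = μ * (B ^ (1 / q) / (1 - μ) ^ (1 / q)) := by
    have hA' : 0 < A ^ (1 / q) := rpow_pos_of_pos hA _
    calc lam * A ^ (1 / q) * t
        = lam * μ ^ (1 / q) * (B ^ (1 / q) / (1 - μ) ^ (1 / q)) := by
          rw [hceq, div_rpow hB hA.le, div_rpow hμ0.le hμ1.le]
          field_simp
      _ = μ * (B ^ (1 / q) / (1 - μ) ^ (1 / q)) := by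
          rw [mul_rpow_rpow_div_sub_one_rpow_inv hl0 hq]
  have hpow : (1 - μ) ^ ((q - 1) / q) = (1 - μ) / (1 - μ) ^ (1 / q) := by
    rw [show (q - 1) / q = 1 - 1 / q by field_simp, rpow_sub hμ1, rpow_one]
  rw [hnorm_sub, hnorm_p, hpow]
  linear_combination -hcross

theorem stmt5_general (d : ℕ) (q lam c : ℝ) (hq : 1 < q) (hlam : lam ∈ Set.Ioo (0:ℝ) 1)
    (f : Fin d → ℝ) (hf : ∀ j, 0 < f j)
    (S : Finset (Fin d))
    (ΔS ΔSc : ℝ)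
    (hΔSdef : ΔS = ∑ j ∈ S, (f j) ^ q)
    (hnorm : ∑ j, (f j) ^ q = 1)
    (hΔScdef : ΔSc = 1 - ΔS) (hΔSpos : 0 < ΔS) (hΔScpos : 0 < ΔSc)
    (hc : c ∈ Set.Ico (0:ℝ) 1)
    (hceq : c / (1-c) =
      (ΔSc / ΔS) ^ (1/q) * (lam ^ (q/(q-1)) / (1 - lam ^ (q/(q-1)))) ^ (1/q))
    (p : Fin d → ℝ) (hp : ∀ j, p j = if j ∈ S then f j / (1-c) else 0) :
    (∑ j, |p j - f j| ^ q) ^ (1/q) - lam * (∑ j, |p j| ^ q) ^ (1/q)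
      = (1 - lam ^ (q/(q-1))) ^ ((q-1)/q) * ΔSc ^ (1/q) - lam * ΔS ^ (1/q) := by
  obtain ⟨hc0, hc1⟩ := hc
  have hf0 : ∀ j, 0 ≤ f j := fun j => (hf j).le
  have hcompl : ∑ j ∈ Sᶜ, f j ^ q = ΔSc := by
    rw [hΔScdef, ← hnorm, ← sum_add_sum_compl S, hΔSdef, add_sub_cancel_left]
  simp only [hp]
  rw [sum_abs_ite_div_sub_rpow S hf0 (by linarith) (by linarith),
    sum_abs_ite_div_rpow S (by positivity) hf0 (by linarith), ← hΔSdef, hcompl, sub_sub_cancel]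
  exact rpow_inv_sub_mul_rpow_inv_eq hq hlam.1 hlam.2 hΔSpos hΔScpos.le hc1 hceq

/-- Closed form of g(p) = ‖p-f‖_q - λ‖p‖_q for p with p_j = f_j/(1-c) on S and 0 off S. -/
theorem stmt5 (d : ℕ) (q lam c : ℝ) (hq : 1 < q) (hlam : lam ∈ Set.Ioo (0:ℝ) 1)
    (f : Fin d → ℝ) (hf : ∀ j, 0 < f j)
    (S : Finset (Fin d)) (hS : S.Nonempty)
    (ΔS ΔSc : ℝ)
    (hΔSdef : ΔS = ∑ j ∈ S, (f j) ^ q)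
    (hnorm : ∑ j, (f j) ^ q = 1)
    (hΔScdef : ΔSc = 1 - ΔS) (hΔSpos : 0 < ΔS) (hΔScpos : 0 < ΔSc)
    (hc : c ∈ Set.Ico (0:ℝ) 1)
    (hceq : c / (1-c) =
      (ΔSc / ΔS) ^ (1/q) * (lam ^ (q/(q-1)) / (1 - lam ^ (q/(q-1)))) ^ (1/q))
    (p : Fin d → ℝ) (hp : ∀ j, p j = if j ∈ S then f j / (1-c) else 0) :
    (∑ j, |p j - f j| ^ q) ^ (1/q) - lam * (∑ j, |p j| ^ q) ^ (1/q)
      = (1 - lam ^ (q/(q-1))) ^ ((q-1)/q) * ΔSc ^ (1/q) - lam * ΔS ^ (1/q) :=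
  stmt5_general d q lam c hq hlam f hf S ΔS ΔSc hΔSdef hnorm hΔScdef hΔSpos hΔScpos hc hceq p hp
end

section
/- For any z ∈ (0, 1/2], q ≥ 1, and δ > 0 satisfying δ(1-z)^{(1-2q)/q} = z^{(1-2q)/q}, one has (1 - 1/q)(δ(1-z)^{1/q} - z^{1/q}) - (1/q)z^{(1-q)/q} + 1 ≥ 0. -/
/-!
Put `t = z^(1/q)`. The constraint on `δ` turns `δ (1-z)^(1/q)` into `t (1-z)² / z²`, and then
`q z²` times the expression is `q z² + t ((q-1)(1-2z) - z)`, an affine function of `t`.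
By Bernoulli's inequality `t` lies in `[0, (q-1+z)/q]`, and the affine function is nonnegative at
both ends of that interval: its value at the right end is `(q-1)²(1-z)²/q`.
-/

open Real

lemma mul_rpow_one_div_le_sub_one_add {x q : ℝ} (hx : 0 ≤ x) (hq : 1 ≤ q) :
    q * x ^ (1 / q) ≤ q - 1 + x := by
  have hq0 : 0 < q := by linarith
  have bernoulli := rpow_one_add_le_one_add_mul_self (s := x - 1) (p := 1 / q) (by linarith)
    (by positivity) ((div_le_one hq0).2 hq)
  rw [add_sub_cancel] at bernoulli
  calc q * x ^ (1 / q) ≤ q * (1 + 1 / q * (x - 1)) := by gcongr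
    _ = q - 1 + x := by field_simp; ring

lemma zero_le_mul_sq_add_mul_of_mul_le {q z t : ℝ} (hq : 0 ≤ q) (ht : 0 ≤ t)
    (htq : q * t ≤ q - 1 + z) : 0 ≤ q * z ^ 2 + t * ((q - 1) * (1 - 2 * z) - z) := by
  have hs : 0 ≤ q - 1 + z := (mul_nonneg hq ht).trans htq
  rcases hs.eq_or_lt with hs | hs
  · obtain rfl : z = 1 - q := by linarith
    have hqt : q * t = 0 := le_antisymm (by linarith) (mul_nonneg hq ht)
    linear_combination (2 * (1 - q)) * hqt + mul_nonneg hq (sq_nonneg (1 - q))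
  · refine nonneg_of_mul_nonneg_right ?_ hs
    calc 0 ≤ (q - 1 + z - q * t) * (q * z ^ 2) + t * ((q - 1) * (1 - z)) ^ 2 := by
          have := sub_nonneg.2 htq
          positivity
      _ = (q - 1 + z) * (q * z ^ 2 + t * ((q - 1) * (1 - 2 * z) - z)) := by ring

lemma zero_le_objective_of_mul_le {q z t : ℝ} (hq : 0 < q) (hz : 0 < z) (ht : 0 ≤ t)
    (htq : q * t ≤ q - 1 + z) :
    0 ≤ (1 - 1 / q) * (t * (1 - z) ^ 2 / z ^ 2 - t) - 1 / q * (t / z) + 1 := by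
  have hform : (1 - 1 / q) * (t * (1 - z) ^ 2 / z ^ 2 - t) - 1 / q * (t / z) + 1
      = (q * z ^ 2 + t * ((q - 1) * (1 - 2 * z) - z)) / (q * z ^ 2) := by
    field_simp
    ring
  rw [hform]
  exact div_nonneg (zero_le_mul_sq_add_mul_of_mul_le hq.le ht htq) (by positivity)

theorem stmt9_general (q δ z : ℝ) (hq : 1 ≤ q) (hz : z ∈ Set.Ioc (0:ℝ) (1/2))
    (h : δ * (1-z) ^ ((1-2*q)/q) = z ^ ((1-2*q)/q)) :
    0 ≤ (1 - 1/q) * (δ * (1-z) ^ (1/q) - z ^ (1/q)) - (1/q) * z ^ ((1-q)/q) + 1 := by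
  obtain ⟨hz0, hz2⟩ := hz
  have hq0 : 0 < q := by linarith
  have h1z : 0 < 1 - z := by linarith
  have hexp_two : (1 - 2 * q) / q = 1 / q - 2 := by field_simp
  have hexp_one : (1 - q) / q = 1 / q - 1 := by field_simp
  rw [hexp_two, rpow_sub h1z, rpow_sub hz0, rpow_two, rpow_two] at h
  have hδ' : δ * (1 - z) ^ (1 / q) = z ^ (1 / q) * (1 - z) ^ 2 / z ^ 2 := by
    field_simp at h ⊢
    linear_combination h
  rw [hδ', hexp_one, rpow_sub_one hz0.ne']
  exact zero_le_objective_of_mul_le hq0 hz0 (rpow_nonneg hz0.le _)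
    (mul_rpow_one_div_le_sub_one_add hz0.le hq)

/-- For z ∈ (0,1/2], q ≥ 1, δ > 0 with δ(1-z)^{(1-2q)/q} = z^{(1-2q)/q}:
(1-1/q)(δ(1-z)^{1/q} - z^{1/q}) - (1/q)z^{(1-q)/q} + 1 ≥ 0. -/
theorem stmt9 (q δ z : ℝ) (hq : 1 ≤ q) (hz : z ∈ Set.Ioc (0:ℝ) (1/2)) (hδ : 0 < δ)
    (h : δ * (1-z) ^ ((1-2*q)/q) = z ^ ((1-2*q)/q)) :
    0 ≤ (1 - 1/q) * (δ * (1-z) ^ (1/q) - z ^ (1/q)) - (1/q) * z ^ ((1-q)/q) + 1 :=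
  stmt9_general q δ z hq hz h
end

section
/- As q → ∞, the solution a*(q) ∈ (0,1/2) of the equation 2(1-1/q)a + (1/q)a^{(1-q)/q} - 2 + 1/q = 0 satisfies q·a*(q) → 1/2; consequently δ* = ((a*)^{1/q} + 1 - 2a*)/(1-a*)^{1/q} → 2 and λ* = (1 + (δ*)^{q/(q-1)})^{-(q-1)/q} → 1/3. -/
open Filter Real Topology

/-! The optimality equation says `a ^ ((1 - q) / q) = R` with `R = 2q - 1 - 2(q - 1)a`, hence
`a ^ (1 / q) = R * a` and `a ^ (1 / q) = R ^ (-1 / (q - 1))`. As `0 < a < 1/2` gives `q < R ≤ 2q - 1`,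
the second identity squeezes `a ^ (1 / q)` between `(2q - 1) ^ (-1 / (q - 1)) → 1` and `1`, while the
first gives `q * a ≤ a ^ (1 / q) ≤ 1`. So `a → 0`, `R / q → 2` and `q * a = a ^ (1 / q) / (R / q) → 1/2`.
The limits of `δ*` and of `λ* = (1 + δ* ^ p) ^ (-1 / p)`, `p = q / (q - 1) → 1`, follow by continuity. -/

lemma tendsto_div_sub_one_atTop : Tendsto (fun q : ℝ => q / (q - 1)) atTop (𝓝 1) := by
  have h : Tendsto (fun q : ℝ => (1 - q⁻¹)⁻¹) atTop (𝓝 1) := by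
    simpa using ((tendsto_const_nhds (x := (1 : ℝ))).sub tendsto_inv_atTop_zero).inv₀
      (by norm_num)
  refine h.congr' ((eventually_ne_atTop 0).mono fun q hq => ?_)
  field_simp

lemma tendsto_two_mul_sub_one_rpow_neg_inv :
    Tendsto (fun q : ℝ => (2 * q - 1) ^ (-1 / (q - 1))) atTop (𝓝 1) := by
  have hlin : Tendsto (fun q : ℝ => 2 * q - 1) atTop atTop :=
    tendsto_atTop_add_const_right atTop (-1) (tendsto_id.const_mul_atTop two_pos)
  refine ((tendsto_rpow_div_mul_add (-2) 1 (-1) one_ne_zero.symm).comp hlin).congr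
    fun q => ?_
  rw [Function.comp_apply, show (1 : ℝ) * (2 * q - 1) + -1 = 2 * (q - 1) by ring,
    show (-2 : ℝ) = 2 * -1 by norm_num, mul_div_mul_left _ _ two_ne_zero]

noncomputable def optimalityResidual (q a : ℝ) : ℝ :=
  2 * (1 - 1 / q) * a + (1 / q) * a ^ ((1 - q) / q) - 2 + 1 / q

section OptimalityRoot

variable {q a : ℝ}

lemma rpow_eq_of_optimalityResidual_eq_zero (hq : q ≠ 0) (heq : optimalityResidual q a = 0) :
    a ^ ((1 - q) / q) = 2 * q - 1 - 2 * (q - 1) * a := by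
  rw [optimalityResidual] at heq
  field_simp at heq
  linarith

lemma rpow_one_div_eq_of_optimalityResidual_eq_zero (hq : q ≠ 0) (ha : 0 < a)
    (heq : optimalityResidual q a = 0) :
    a ^ (1 / q) = (2 * q - 1 - 2 * (q - 1) * a) * a := by
  rw [← rpow_eq_of_optimalityResidual_eq_zero hq heq, ← rpow_add_one ha.ne']
  congr 1
  field_simp
  ring

lemma two_mul_sub_one_rpow_le_of_optimalityResidual_eq_zero (hq : 1 < q) (ha : 0 < a)
    (heq : optimalityResidual q a = 0) :
    (2 * q - 1) ^ (-1 / (q - 1)) ≤ a ^ (1 / q) := by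
  have hq₀ : q ≠ 0 := by positivity
  have hq₁ : q - 1 ≠ 0 := by linarith
  have hexp : (1 - q) / q * (-1 / (q - 1)) = 1 / q := by field_simp; ring
  rw [← hexp, rpow_mul ha.le]
  refine rpow_le_rpow_of_nonpos (by positivity) ?_ ?_
  · rw [rpow_eq_of_optimalityResidual_eq_zero hq₀ heq]; nlinarith
  · exact div_nonpos_of_nonpos_of_nonneg (by norm_num) (by linarith)

lemma le_one_div_of_optimalityResidual_eq_zero (hq : 1 < q) (ha₀ : 0 < a) (ha₁ : a < 1 / 2)
    (heq : optimalityResidual q a = 0) :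
    a ≤ 1 / q := by
  have hq₀ : (0 : ℝ) < q := by linarith
  have hpow := rpow_one_div_eq_of_optimalityResidual_eq_zero hq₀.ne' ha₀ heq
  have hle : a ^ (1 / q) ≤ 1 := rpow_le_one ha₀.le (by linarith) (by positivity)
  rw [le_div_iff₀ hq₀]
  nlinarith

end OptimalityRoot

section Limits

variable {a : ℝ → ℝ}

lemma tendsto_one_div_atTop_nhds_zero : Tendsto (fun q : ℝ => 1 / q) atTop (𝓝 0) :=
  tendsto_const_nhds.div_atTop tendsto_id

lemma tendsto_id_mul_of_rpow_one_div_eq (ha : Tendsto a atTop (𝓝 0))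
    (hroot : Tendsto (fun q => a q ^ (1 / q)) atTop (𝓝 1))
    (h : ∀ᶠ q in atTop, a q ^ (1 / q) = (2 * q - 1 - 2 * (q - 1) * a q) * a q) :
    Tendsto (fun q => q * a q) atTop (𝓝 (1 / 2)) := by
  have hR : Tendsto (fun q => (2 * q - 1 - 2 * (q - 1) * a q) / q) atTop (𝓝 2) := by
    have h' := ((tendsto_one_div_atTop_nhds_zero.const_sub 2).sub (ha.const_mul 2)).add
      ((ha.const_mul 2).mul tendsto_one_div_atTop_nhds_zero)
    norm_num at h'
    refine h'.congr' ((eventually_ne_atTop 0).mono fun q hq => ?_)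
    field_simp
    ring
  refine (hroot.div hR two_ne_zero).congr' ?_
  filter_upwards [h, eventually_ne_atTop 0, hR.eventually_ne two_ne_zero] with q hq hq₀ hR₀
  have : 2 * q - 1 - 2 * (q - 1) * a q ≠ 0 := (div_ne_zero_iff.mp hR₀).1
  rw [Pi.div_apply, hq]
  field_simp

lemma tendsto_delta (ha : Tendsto a atTop (𝓝 0))
    (hroot : Tendsto (fun q => a q ^ (1 / q)) atTop (𝓝 1)) :
    Tendsto (fun q => (a q ^ (1 / q) + 1 - 2 * a q) / (1 - a q) ^ (1 / q)) atTop (𝓝 2) := by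
  have hden : Tendsto (fun q => (1 - a q) ^ (1 / q)) atTop (𝓝 1) := by
    simpa using (ha.const_sub 1).rpow tendsto_one_div_atTop_nhds_zero (Or.inl (by norm_num))
  have h := ((hroot.add_const 1).sub (ha.const_mul 2)).div hden one_ne_zero
  rwa [show ((1 : ℝ) + 1 - 2 * 0) / 1 = 2 by norm_num] at h

lemma tendsto_one_add_rpow_conjExponent {f : ℝ → ℝ} {d : ℝ} (hf : Tendsto f atTop (𝓝 d))
    (hd : 0 < d) :
    Tendsto (fun q => (1 + f q ^ (q / (q - 1))) ^ (-(q - 1) / q)) atTop (𝓝 (1 + d)⁻¹) := by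
  have hbase : Tendsto (fun q => 1 + f q ^ (q / (q - 1))) atTop (𝓝 (1 + d)) := by
    simpa using (hf.rpow tendsto_div_sub_one_atTop (Or.inl hd.ne')).const_add 1
  have hexp : Tendsto (fun q : ℝ => -(q - 1) / q) atTop (𝓝 (-1)) := by
    have h := (tendsto_div_sub_one_atTop.inv₀ one_ne_zero).neg
    rw [inv_one] at h
    exact h.congr fun q => by rw [inv_div, neg_div]
  simpa [rpow_neg_one] using hbase.rpow hexp (Or.inl (by positivity))

end Limits

/-- As q → ∞, the solution a*(q) of the optimality equation satisfies q·a*(q) → 1/2,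
δ* → 2, and λ* → 1/3. -/
theorem stmt11 (a : ℝ → ℝ)
    (ha : ∀ q : ℝ, 1 < q → a q ∈ Set.Ioo (0:ℝ) (1/2) ∧
      2*(1 - 1/q)*(a q) + (1/q)*(a q) ^ ((1-q)/q) - 2 + 1/q = 0) :
    Filter.Tendsto (fun q => q * a q) Filter.atTop (nhds (1/2)) ∧
    Filter.Tendsto (fun q => ((a q) ^ (1/q) + 1 - 2*(a q)) / (1 - a q) ^ (1/q))
      Filter.atTop (nhds 2) ∧
    Filter.Tendsto (fun q =>
        (1 + (((a q) ^ (1/q) + 1 - 2*(a q)) / (1 - a q) ^ (1/q)) ^ (q/(q-1)))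
          ^ (-(q-1)/q))
      Filter.atTop (nhds (1/3)) := by
  have hsol : ∀ᶠ q in atTop, 1 < q ∧ a q ∈ Set.Ioo 0 (1 / 2) ∧ optimalityResidual q (a q) = 0 :=
    (eventually_gt_atTop 1).mono fun q hq => ⟨hq, ha q hq⟩
  have ha₀ : Tendsto a atTop (𝓝 0) :=
    tendsto_of_tendsto_of_tendsto_of_le_of_le' tendsto_const_nhds tendsto_one_div_atTop_nhds_zero
      (hsol.mono fun q ⟨_, ⟨h₀, _⟩, _⟩ => h₀.le)
      (hsol.mono fun q ⟨hq, ⟨h₀, h₁⟩, he⟩ => le_one_div_of_optimalityResidual_eq_zero hq h₀ h₁ he)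
  have hroot : Tendsto (fun q => a q ^ (1 / q)) atTop (𝓝 1) :=
    tendsto_of_tendsto_of_tendsto_of_le_of_le' tendsto_two_mul_sub_one_rpow_neg_inv
      tendsto_const_nhds
      (hsol.mono fun q ⟨hq, ⟨h₀, _⟩, he⟩ =>
        two_mul_sub_one_rpow_le_of_optimalityResidual_eq_zero hq h₀ he)
      (hsol.mono fun q ⟨hq, ⟨h₀, h₁⟩, _⟩ =>
        rpow_le_one h₀.le (by linarith) (by positivity))
  have hδ := tendsto_delta ha₀ hroot
  refine ⟨tendsto_id_mul_of_rpow_one_div_eq ha₀ hroot ?_, hδ, ?_⟩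
  · exact hsol.mono fun q ⟨hq, ⟨h₀, _⟩, he⟩ =>
      rpow_one_div_eq_of_optimalityResidual_eq_zero (by positivity) h₀ he
  · convert tendsto_one_add_rpow_conjExponent hδ two_pos using 2
    norm_num
end

section
/- For c ∈ [0, 1/2), let a_1 = (2 + c - √(3+2c))/2, δ_1 = ((1-2a_1-c)/(1+c) + √(a_1))/√(1-a_1), and λ_1 = (1 + δ_1^2)^{-1/2}. Then λ_1 = (c+1)·(4√(2c+3)·c + 6√(2c+3) - 10c - 8)^{-1/2}. -/
/-! With `s = √(3 + 2c)` one has `a₁ = ((s - 1)/2)²` and `1 - a₁ = (s - c)/2`, so both square roots in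
`δ₁` disappear: `δ₁ = ((3 + c)s - (3 + 5c)) / (2(1 + c)√((s - c)/2))`. Reducing modulo `s² = 3 + 2c`
then gives `1 + δ₁² = (4sc + 6s - 10c - 8)/(c + 1)²`, whose inverse square root is the claimed value. -/

namespace CMPConsistency

open Real

lemma rpow_neg_one_half_eq_inv_sqrt {x : ℝ} (hx : 0 ≤ x) : x ^ (-(1:ℝ)/2) = (√x)⁻¹ := by
  rw [neg_div, rpow_neg hx, ← sqrt_eq_rpow]

variable {a c s : ℝ}

lemma sqrt_eq_of_eq_two_add_sub_div_two (hs : s ^ 2 = 3 + 2*c) (hs1 : 1 ≤ s)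
    (ha : a = (2 + c - s)/2) : √a = (s - 1)/2 := by
  rw [show a = ((s - 1)/2)^2 by linear_combination ha - hs/4, sqrt_sq (by linarith)]

lemma delta_eq (hs : s ^ 2 = 3 + 2*c) (hs1 : 1 ≤ s) (hc : 1 + c ≠ 0) (ha : a = (2 + c - s)/2) :
    ((1 - 2*a - c)/(1+c) + √a) / √(1-a) = ((3 + c)*s - (3 + 5*c)) / (2*(1 + c)*√((s - c)/2)) := by
  rw [sqrt_eq_of_eq_two_add_sub_div_two hs hs1 ha, show 1 - a = (s - c)/2 by rw [ha]; ring, ha]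
  field_simp
  ring

lemma one_add_delta_sq (hs : s ^ 2 = 3 + 2*c) (hs1 : 1 ≤ s) (hc : 1 + c ≠ 0) (hcs : c < s)
    (ha : a = (2 + c - s)/2) :
    1 + (((1 - 2*a - c)/(1+c) + √a) / √(1-a)) ^ 2 = (4*s*c + 6*s - 10*c - 8) / (c + 1)^2 := by
  rw [delta_eq hs hs1 hc ha, div_pow, mul_pow, sq_sqrt (by linarith)]
  have : s - c ≠ 0 := by linarith
  have : c + 1 ≠ 0 := by rwa [add_comm]
  field_simp
  linear_combination (2*(c+1)^2*(3+c)^2 - 8*(c+1)^2*(2*c+3) + (3+8*c+6*c^2-c^4)) * hs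

end CMPConsistency

open CMPConsistency in
/-- Consistency constant for c ∈ [0,1/2):
λ₁ = (c+1)·(4√(2c+3)c + 6√(2c+3) - 10c - 8)^{-1/2}. -/
theorem stmt13 (c : ℝ) (hc : c ∈ Set.Ico (0:ℝ) (1/2)) :
    let a : ℝ := (2 + c - Real.sqrt (3 + 2*c)) / 2
    let δ : ℝ := ((1 - 2*a - c)/(1+c) + Real.sqrt a) / Real.sqrt (1-a)
    let lam : ℝ := (1 + δ^2) ^ (-(1:ℝ)/2)
    lam = (c+1) *
      (4*Real.sqrt (2*c+3)*c + 6*Real.sqrt (2*c+3) - 10*c - 8) ^ (-(1:ℝ)/2) := by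
  intro a δ lam
  obtain ⟨hc0, hc1⟩ := hc
  set s := √(3 + 2*c)
  have hs : s ^ 2 = 3 + 2*c := Real.sq_sqrt (by linarith)
  have hs1 : 1 ≤ s := by nlinarith [Real.sqrt_nonneg (3 + 2*c)]
  have hδ : 1 + δ ^ 2 = (4*s*c + 6*s - 10*c - 8) / (c + 1)^2 :=
    one_add_delta_sq hs hs1 (by linarith) (by nlinarith) rfl
  have hX : 0 < 4*s*c + 6*s - 10*c - 8 := by
    rw [show 4*s*c + 6*s - 10*c - 8 = (c + 1)^2 * (1 + δ^2) by rw [hδ]; field_simp]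
    positivity
  rw [show √(2*c + 3) = s by rw [add_comm]]
  simp only [lam, hδ, rpow_neg_one_half_eq_inv_sqrt hX.le,
    rpow_neg_one_half_eq_inv_sqrt (div_nonneg hX.le (sq_nonneg _)),
    Real.sqrt_div' _ (sq_nonneg _), Real.sqrt_sq (by linarith : 0 ≤ c + 1)]
  field_simp
end

section
/- For c ∈ [0,1), let a_2 = (2 - c - √(3-2c))/2, δ_2 = ((1-2a_2+c)/(1-c) + √(a_2))/√(1-a_2), and λ_2 = (1 + δ_2^2)^{-1/2}. Then λ_2 = (1-c)·(-4√(3-2c)·c + 6√(3-2c) + 10c - 8)^{-1/2}. -/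
/-- Robustness constant for c ∈ [0,1):
λ₂ = (1-c)·(-4√(3-2c)c + 6√(3-2c) + 10c - 8)^{-1/2}. -/
theorem stmt15 (c : ℝ) (hc : c ∈ Set.Ico (0:ℝ) 1) :
    let a : ℝ := (2 - c - Real.sqrt (3 - 2*c)) / 2
    let δ : ℝ := ((1 - 2*a + c)/(1-c) + Real.sqrt a) / Real.sqrt (1-a)
    let lam : ℝ := (1 + δ^2) ^ (-(1:ℝ)/2)
    lam = (1-c) *
      (-4*Real.sqrt (3-2*c)*c + 6*Real.sqrt (3-2*c) + 10*c - 8) ^ (-(1:ℝ)/2) := by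
  obtain ⟨hc0, hc1⟩ := hc
  set s := Real.sqrt (3 - 2*c) with hsdef
  intro a δ lam
  have hs2 : s^2 = 3 - 2*c := Real.sq_sqrt (by linarith)
  have hs0 : 0 ≤ s := Real.sqrt_nonneg _
  have hs1 : 1 < s := by nlinarith
  have ha : a = (2 - c - s)/2 := rfl
  have h1a : 0 < 1 - a := by rw [ha]; nlinarith
  have hsa : Real.sqrt a = (s-1)/2 := by
    rw [show a = ((s-1)/2)^2 from by rw [ha]; linear_combination (-(1:ℝ)/4)*hs2]
    exact Real.sqrt_sq (by linarith)
  set u := Real.sqrt (1-a) with hudef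
  have hu2 : u^2 = 1 - a := Real.sq_sqrt (le_of_lt h1a)
  have hu0 : 0 < u := Real.sqrt_pos.mpr h1a
  have hδ : δ = ((1 - 2*a + c)/(1-c) + (s-1)/2) / u := by
    show ((1 - 2*a + c)/(1-c) + Real.sqrt a) / u = _
    rw [hsa]
  have hδ2 : δ^2 = ((1 - 2*a + c)/(1-c) + (s-1)/2)^2 / (1-a) := by
    rw [hδ, div_pow, hu2]
  have hc' : c = (3 - s^2)/2 := by linarith
  have h1c : (0:ℝ) < 1 - c := by linarith
  have hδu : δ * ((1-c)*u) = (1 - 2*a + c) + (s-1)/2*(1-c) := by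
    rw [hδ]
    field_simp
  have hkey : -4*s*c + 6*s + 10*c - 8 = (1-c)^2 * (1 + δ^2) := by
    apply mul_right_cancel₀ (ne_of_gt h1a)
    have expand : (1-c)^2 * (1 + δ^2) * (1-a) = (1-c)^2*(1-a) + (δ*((1-c)*u))^2 := by
      rw [mul_pow, mul_pow, hu2]; ring
    rw [expand, hδu, ha, hc']
    ring
  have hA : (0:ℝ) < 1 + δ^2 := by positivity
  have rpow_half : ∀ x : ℝ, 0 ≤ x → x ^ (-(1:ℝ)/2) = (Real.sqrt x)⁻¹ := by
    intro x hx
    rw [show (-(1:ℝ)/2) = -(1/2) by ring, Real.rpow_neg hx, ← Real.sqrt_eq_rpow]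
  have hD0 : (0:ℝ) ≤ -4*s*c + 6*s + 10*c - 8 := by rw [hkey]; positivity
  show (1 + δ^2) ^ (-(1:ℝ)/2) = (1-c) * (-4*s*c + 6*s + 10*c - 8) ^ (-(1:ℝ)/2)
  rw [rpow_half _ (le_of_lt hA), rpow_half _ hD0, hkey,
    Real.sqrt_mul (sq_nonneg (1-c)), Real.sqrt_sq (le_of_lt h1c)]
  have hsq : 0 < Real.sqrt (1 + δ^2) := Real.sqrt_pos.mpr hA
  field_simp
end

section
/- Fix q > 1, λ ∈ (0,1), f ∈ R^d with f_j > 0 for all j, and let g(l) = ||l - f||_q - λ||l||_q. Suppose p is a local minimizer of g with p_j ∉ {0, f_j} for all j, and define c = λ^{1/(q-1)}·||p - f||_q/||p||_q. Then for each j: if p_j > f_j then (p_j - f_j)/p_j = c, and if p_j < 0 then (f_j - p_j)/(-p_j) = c. Consequently p cannot simultaneously have a coordinate in (f_j, ∞) and a coordinate in (-∞, 0). -/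
/-!
At a local minimizer `p`, moving only the `j`-th coordinate gives a one-variable function with a
local minimum at `p j`; both `q`-norms are differentiable there, so
`|p_j - f_j|^(q-2) (p_j - f_j) / ‖p - f‖^(q-1) = λ |p_j|^(q-2) p_j / ‖p‖^(q-1)`.
When `p_j - f_j` and `p_j` have the same sign, i.e. when `p_j > f_j` or `p_j < 0`, the signs
cancel and a `(q-1)`-th root gives `(p_j - f_j) / p_j = c`. That ratio is below `1` in the
first case and above `1` in the second, so the two cases cannot both occur.
-/

open Real Function

noncomputable def qNorm {ι : Type*} [Fintype ι] (q : ℝ) (x : ι → ℝ) : ℝ :=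
  (∑ k, |x k| ^ q) ^ (1 / q)

lemma IsLocalMin.comp_update {ι : Type*} [DecidableEq ι] {F : (ι → ℝ) → ℝ} {p : ι → ℝ}
    (h : IsLocalMin F p) (j : ι) : IsLocalMin (fun t => F (update p j t)) (p j) :=
  IsLocalMin.comp_continuous (by rwa [update_eq_self])
    (continuous_const.update j continuous_id).continuousAt

section
variable {ι : Type*} [Fintype ι] {q : ℝ}

lemma sum_abs_rpow_pos {x : ι → ℝ} (hx : x ≠ 0) : 0 < ∑ k, |x k| ^ q := by
  obtain ⟨j, hj⟩ := Function.ne_iff.mp hx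
  exact Finset.sum_pos' (fun k _ => by positivity)
    ⟨j, Finset.mem_univ j, rpow_pos_of_pos (abs_pos.mpr hj) q⟩

lemma qNorm_pos {x : ι → ℝ} (hx : x ≠ 0) : 0 < qNorm q x :=
  rpow_pos_of_pos (sum_abs_rpow_pos hx) _

lemma sum_abs_rpow_update [DecidableEq ι] (x : ι → ℝ) (j : ι) (t : ℝ) :
    ∑ k, |update x j t k| ^ q = |t| ^ q + ∑ k ∈ Finset.univ.erase j, |x k| ^ q := by
  rw [← Finset.add_sum_erase _ _ (Finset.mem_univ j), update_self]
  congr 1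
  exact Finset.sum_congr rfl fun k hk => by rw [update_of_ne (Finset.ne_of_mem_erase hk)]

lemma hasDerivAt_qNorm_update [DecidableEq ι] (hq : 1 < q) {x : ι → ℝ} (hx : x ≠ 0) (j : ι) :
    HasDerivAt (fun t => qNorm q (update x j t))
      (|x j| ^ (q - 2) * x j * qNorm q x ^ (1 - q)) (x j) := by
  have hsum := sum_abs_rpow_update (q := q) x j (x j)
  rw [update_eq_self] at hsum
  have hd := ((hasDerivAt_abs_rpow (x j) hq).add_const
    (∑ k ∈ Finset.univ.erase j, |x k| ^ q)).rpow_const (p := 1 / q)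
    (Or.inl (hsum ▸ (sum_abs_rpow_pos hx).ne'))
  rw [← hsum] at hd
  have hval : q * |x j| ^ (q - 2) * x j * (1 / q) * (∑ k, |x k| ^ q) ^ (1 / q - 1)
      = |x j| ^ (q - 2) * x j * qNorm q x ^ (1 - q) := by
    rw [qNorm, ← rpow_mul (sum_abs_rpow_pos hx).le]
    field_simp
  rw [hval] at hd
  simpa only [qNorm, sum_abs_rpow_update] using hd

lemma IsLocalMin.abs_rpow_mul_qNorm_rpow_eq [DecidableEq ι] (hq : 1 < q) {lam : ℝ}
    {p f : ι → ℝ} (hmin : IsLocalMin (fun l => qNorm q (l - f) - lam * qNorm q l) p)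
    (hpf : p ≠ f) (hp : p ≠ 0) (j : ι) :
    |p j - f j| ^ (q - 2) * (p j - f j) * qNorm q (p - f) ^ (1 - q)
      = lam * (|p j| ^ (q - 2) * p j * qNorm q p ^ (1 - q)) := by
  have hshift : ∀ t, update p j t - f = update (p - f) j (t - f j) := fun t => by
    rw [Function.update_sub, update_eq_self]
  have hdist : HasDerivAt (fun t => qNorm q (update p j t - f))
      (|p j - f j| ^ (q - 2) * (p j - f j) * qNorm q (p - f) ^ (1 - q)) (p j) := by
    have := (hasDerivAt_qNorm_update hq (sub_ne_zero.mpr hpf) j).comp (p j)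
      ((hasDerivAt_id (p j)).sub_const (f j))
    simpa only [hshift, mul_one, Pi.sub_apply, Function.comp_def, id] using this
  exact sub_eq_zero.mp <| (hmin.comp_update j).hasDerivAt_eq_zero
    (hdist.sub ((hasDerivAt_qNorm_update hq hp j).const_mul lam))

end

lemma div_eq_of_rpow_mul_eq {q lam X Y a b : ℝ} (hq : q ≠ 1) (hlam : 0 ≤ lam) (hX : 0 ≤ X)
    (hY : 0 < Y) (ha : 0 < a) (hb : 0 < b)
    (h : X ^ (q - 1) * a ^ (1 - q) = lam * (Y ^ (q - 1) * b ^ (1 - q))) :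
    X / Y = lam ^ (1 / (q - 1)) * a / b := by
  have hq1 : q - 1 ≠ 0 := sub_ne_zero.mpr hq
  rw [show 1 - q = -(q - 1) by ring, rpow_neg ha.le, rpow_neg hb.le] at h
  have hXa : X / a = lam ^ (1 / (q - 1)) * (Y / b) := by
    refine (rpow_left_inj (by positivity) (by positivity) hq1).mp ?_
    rw [mul_rpow (by positivity) (by positivity), ← rpow_mul hlam, one_div_mul_cancel hq1,
      rpow_one, div_rpow hX ha.le, div_rpow hY.le hb.le]
    simpa only [div_eq_mul_inv] using h
  field_simp at hXa ⊢
  linear_combination hXa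

lemma abs_rpow_sub_two_mul_self (q : ℝ) {z : ℝ} (hz : z ≠ 0) :
    |z| ^ (q - 2) * z = |z| ^ (q - 1) * SignType.sign z := by
  calc |z| ^ (q - 2) * z = |z| ^ (q - 2) * (SignType.sign z * |z|) := by rw [sign_mul_abs]
    _ = |z| ^ (q - 1) * SignType.sign z := by
      rw [show q - 1 = q - 2 + 1 by ring, rpow_add_one (abs_ne_zero.mpr hz)]
      ring

lemma div_eq_of_abs_rpow_mul_eq {q lam x y a b : ℝ} (hq : q ≠ 1) (hlam : 0 ≤ lam)
    (ha : 0 < a) (hb : 0 < b) (hxy : 0 < x / y)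
    (h : |x| ^ (q - 2) * x * a ^ (1 - q) = lam * (|y| ^ (q - 2) * y * b ^ (1 - q))) :
    x / y = lam ^ (1 / (q - 1)) * a / b := by
  have hy : y ≠ 0 := by rintro rfl; simp at hxy
  have hx : x ≠ 0 := by rintro rfl; simp at hxy
  have hsign : SignType.sign x = SignType.sign y := by
    rw [← div_mul_cancel₀ x hy, sign_mul, sign_pos hxy, one_mul]
  rw [abs_rpow_sub_two_mul_self q hx, abs_rpow_sub_two_mul_self q hy, hsign] at h
  rw [← abs_of_pos hxy, abs_div]
  refine div_eq_of_rpow_mul_eq hq hlam (abs_nonneg x) (abs_pos.mpr hy) ha hb ?_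
  have hs : (SignType.sign y : ℝ) ≠ 0 := left_ne_zero_of_mul (by rwa [sign_mul_abs])
  exact mul_right_cancel₀ hs (by linear_combination h)

/-- First-order conditions at a local minimizer p of g with p_j ∉ {0, f_j}:
(p_j - f_j)/p_j = c when p_j > f_j, (f_j - p_j)/(-p_j) = c when p_j < 0, where
c = λ^{1/(q-1)}‖p-f‖_q/‖p‖_q; consequently p cannot simultaneously have a
coordinate above f_j and a negative coordinate. -/
theorem stmt18 (d : ℕ) (q lam : ℝ) (hq : 1 < q) (hlam : lam ∈ Set.Ioo (0:ℝ) 1)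
    (f : Fin d → ℝ) (hf : ∀ j, 0 < f j)
    (p : Fin d → ℝ) (hp : ∀ j, p j ≠ 0 ∧ p j ≠ f j)
    (hmin : IsLocalMin (fun l : Fin d → ℝ =>
      (∑ j, |l j - f j| ^ q) ^ (1/q) - lam * (∑ j, |l j| ^ q) ^ (1/q)) p)
    (c : ℝ)
    (hc : c = lam ^ (1/(q-1)) *
      (∑ j, |p j - f j| ^ q) ^ (1/q) / (∑ j, |p j| ^ q) ^ (1/q)) :
    (∀ j, (f j < p j → (p j - f j) / p j = c) ∧
          (p j < 0 → (f j - p j) / (-(p j)) = c)) ∧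
    ¬ (∃ j k, f j < p j ∧ p k < 0) := by
  have hratio : ∀ j, 0 < (p j - f j) / p j → (p j - f j) / p j = c := fun j hj => by
    have hpf : p ≠ f := fun h => (hp j).2 (congrFun h j)
    have hp0 : p ≠ 0 := fun h => (hp j).1 (congrFun h j)
    rw [hc]
    exact div_eq_of_abs_rpow_mul_eq hq.ne' hlam.1.le (qNorm_pos (sub_ne_zero.mpr hpf))
      (qNorm_pos hp0) hj (hmin.abs_rpow_mul_qNorm_rpow_eq hq hpf hp0 j)
  have habove : ∀ j, f j < p j → (p j - f j) / p j = c := fun j h =>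
    hratio j (div_pos (sub_pos.mpr h) ((hf j).trans h))
  have hbelow : ∀ j, p j < 0 → (p j - f j) / p j = c := fun j h =>
    hratio j (div_pos_of_neg_of_neg (by linarith [hf j]) h)
  refine ⟨fun j => ⟨habove j, fun h => ?_⟩, ?_⟩
  · rw [← neg_sub, neg_div_neg_eq]
    exact hbelow j h
  · rintro ⟨j, k, hj, hk⟩
    have hc_lt : c < 1 := habove j hj ▸ (div_lt_one ((hf j).trans hj)).mpr (by linarith [hf j])
    have hc_gt : 1 < c := hbelow k hk ▸ (one_lt_div_of_neg hk).mpr (by linarith [hf k])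
    linarith
end
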